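/- arXiv:1307.7896 — 2 statements merged into one kernel-verified Lean document; each statement's English description precedes it below -/
import Mathlib

section
/- For all integers k, l ≥ 0, the coefficient operators satisfy c^+_k ∘ d^−_l = d^−_l ∘ c^+_k − d^−_{l−1} ∘ c^+_{k−1} as operators on F, where any term with a negative subscript is zero. (This is the coefficientwise form of the identity E^+_−(z)E^−_+(w) = E^−_+(w)E^+_−(z)(1 − w/z).) -/
open MvPolynomial

/-- The semi-infinite wedge space `Λ`: complex vector space with basis `v_{S,T}`
indexed by pairs `(S, T)` of finite subsets of the positive integers.  The basis
vector `v_{S,T}` encodes the semi-infinite wedge product with support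
`supp(S,T) = {-s-1/2 : s ∈ S} ∪ {-1/2} ∪ {k+1/2 : k ∈ ℤ_{≥1}, k ∉ T} ⊆ ℤ + 1/2`. -/
abbrev Wedge : Type := (Finset ℕ+ × Finset ℕ+) →₀ ℂ

/-- Image of the basis vector `v_{S,T}` under the operator `A(m)` (for `m ∈ ℤ + 1/2`,
i.e. a rational with denominator `2`; `A(m) := 0` for other rationals).
`A(m) v_{S,T} = 0` if `m ∈ supp(S,T)` or `m = 1/2`; otherwise
`A(m) v_{S,T} = (m - 1/2) ⬝ (-1)^j ⬝ v_{S',T'}` where `j = #{i ∈ supp(S,T) : i < m}`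
and `supp(S',T') = supp(S,T) ∪ {m}`.  Writing `m = n + 1/2` with `n = ⌊m⌋ ∈ ℤ`:
if `n ≥ 1` then `m ∈ supp(S,T)` iff `n ∉ T`, and the new support corresponds to
`(S, T \ {n})` with sign exponent `j = |S| + n - #{t ∈ T : t < n}`;
if `n ≤ -2` then `m = -s - 1/2` with `s = -n-1 ≥ 1`, `m ∈ supp(S,T)` iff `s ∈ S`,
and the new support corresponds to `(S ∪ {s}, T)` with `j = #{s' ∈ S : s' > s}`;
if `n = 0` (`m = 1/2`) or `n = -1` (`m = -1/2 ∈ supp(S,T)`) the result is `0`. -/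
noncomputable def Abasis (m : ℚ) (ST : Finset ℕ+ × Finset ℕ+) : Wedge :=
  if m.den = 2 then
    let n : ℤ := ⌊m⌋
    if hn : 1 ≤ n then
      let k : ℕ+ := ⟨n.toNat, by omega⟩
      if k ∈ ST.2 then
        (((n : ℂ)) * (-1) ^ (ST.1.card + n.toNat - (ST.2.filter (· < k)).card)) •
          Finsupp.single (ST.1, ST.2.erase k) (1 : ℂ)
      else 0
    else if hn' : n ≤ -2 then
      let s : ℕ+ := ⟨(-n - 1).toNat, by omega⟩
      if s ∈ ST.1 then 0
      else
        (((n : ℂ)) * (-1) ^ ((ST.1.filter (s < ·)).card)) •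
          Finsupp.single (insert s ST.1, ST.2) (1 : ℂ)
    else 0
  else 0

/-- Image of the basis vector `v_{S,T}` under the operator `A*(m)` (for `m ∈ ℤ + 1/2`).
`A*(m) v_{S,T} = 0` if `-m ∉ supp(S,T)` or `m = 1/2`; otherwise
`A*(m) v_{S,T} = (m - 1/2) ⬝ (-1)^{j'} ⬝ v_{S'',T''}` where
`j' = #{i ∈ supp(S,T) : i < -m}` and `supp(S'',T'') = supp(S,T) \ {-m}`.
Writing `m = n + 1/2`, `n = ⌊m⌋`: if `n ≥ 1` then `-m = -n - 1/2 ∈ supp(S,T)` iff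
`n ∈ S`, new pair `(S \ {n}, T)`, `j' = #{s' ∈ S : s' > n}`; if `n ≤ -2` then
`-m = k + 1/2` with `k = -n-1 ≥ 1`, `-m ∈ supp(S,T)` iff `k ∉ T`, new pair
`(S, T ∪ {k})`, `j' = |S| + k - #{t ∈ T : t < k}`; otherwise `0`. -/
noncomputable def AstarBasis (m : ℚ) (ST : Finset ℕ+ × Finset ℕ+) : Wedge :=
  if m.den = 2 then
    let n : ℤ := ⌊m⌋
    if hn : 1 ≤ n then
      let s : ℕ+ := ⟨n.toNat, by omega⟩
      if s ∈ ST.1 then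
        (((n : ℂ)) * (-1) ^ ((ST.1.filter (s < ·)).card)) •
          Finsupp.single (ST.1.erase s, ST.2) (1 : ℂ)
      else 0
    else if hn' : n ≤ -2 then
      let k : ℕ+ := ⟨(-n - 1).toNat, by omega⟩
      if k ∈ ST.2 then 0
      else
        (((n : ℂ)) * (-1) ^ (ST.1.card + (-n - 1).toNat - (ST.2.filter (· < k)).card)) •
          Finsupp.single (ST.1, insert k ST.2) (1 : ℂ)
    else 0
  else 0

/-- The operator `A(m)` on the semi-infinite wedge space `Λ`, extended linearly. -/
noncomputable def Aop (m : ℚ) : Wedge →ₗ[ℂ] Wedge :=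
  Finsupp.lsum ℂ fun ST => LinearMap.toSpanSingleton ℂ Wedge (Abasis m ST)

/-- The operator `A*(m)` on the semi-infinite wedge space `Λ`, extended linearly. -/
noncomputable def AstarOp (m : ℚ) : Wedge →ₗ[ℂ] Wedge :=
  Finsupp.lsum ℂ fun ST => LinearMap.toSpanSingleton ℂ Wedge (AstarBasis m ST)

/-- The Fock space `F = ℂ[x_1, x_2, ...]`, a polynomial ring in countably many
variables indexed by the positive integers. -/
abbrev Fock : Type := MvPolynomial ℕ+ ℂ

/-- Endomorphisms of the Fock space. -/
abbrev EndF : Type := Module.End ℂ Fock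

/-- The Heisenberg operators on the Fock space: `H(-n)` is multiplication by `x_n`
and `H(n) = -4n ∂/∂x_n` for `n ≥ 1` (and `0` for `n = 0`, which is never used). -/
noncomputable def HF (n : ℤ) : EndF :=
  if hn : 1 ≤ n then ((-4 : ℂ) * (n : ℂ)) • (pderiv (⟨n.toNat, by omega⟩ : ℕ+)).toLinearMap
  else if hn' : n ≤ -1 then LinearMap.mulLeft ℂ (X (⟨(-n).toNat, by omega⟩ : ℕ+))
  else 0

/-- `sgn true = -1`, `sgn false = 1`: the sign `∓` attached to the label `ε ∈ {+, -}`
(`ε = +` is `true`), as in `E^±_+(z) = exp(∓ Σ_{n>0} x_n z^n / (2n))`. -/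
def sgn (ε : Bool) : ℂ := if ε then -1 else 1

/-- The coefficient of `z^k` in the exponential `exp(g(z)) = Σ_j g(z)^j / j!` of an
operator-valued formal power series `g` (with zero constant term, so that only the
terms `j ≤ k` contribute to the coefficient of `z^k`). -/
noncomputable def expCoeff (g : PowerSeries EndF) (k : ℕ) : EndF :=
  ∑ j ∈ Finset.range (k + 1), ((j.factorial : ℂ))⁻¹ • (PowerSeries.coeff (R := EndF) k (g ^ j))

/-- The series `∓ Σ_{n > 0} x_n z^n / (2n)` (multiplication operators). -/
noncomputable def dSeries (ε : Bool) : PowerSeries EndF :=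
  PowerSeries.mk fun n =>
    if hn : 0 < n then sgn ε • (((2 * n : ℂ))⁻¹ • LinearMap.mulLeft ℂ (X (⟨n, hn⟩ : ℕ+)))
    else 0

/-- The series `∓ 2 Σ_{n > 0} (∂/∂x_n) w^n`, where `w` stands for `z^{-1}`. -/
noncomputable def cSeries (ε : Bool) : PowerSeries EndF :=
  PowerSeries.mk fun n =>
    if hn : 0 < n then sgn ε • ((2 : ℂ) • (pderiv (⟨n, hn⟩ : ℕ+)).toLinearMap)
    else 0

/-- `d^ε_l`, the coefficient of `z^l` in `E^ε_+(z) = exp(∓ Σ_{n>0} x_n z^n/(2n))`. -/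
noncomputable def dOp (ε : Bool) (l : ℕ) : EndF := expCoeff (dSeries ε) l

/-- `c^ε_k`, the coefficient of `z^{-k}` in `E^ε_-(z) = exp(∓ 2 Σ_{n>0} (∂/∂x_n) z^{-n})`. -/
noncomputable def cOp (ε : Bool) (k : ℕ) : EndF := expCoeff (cSeries ε) k

/-- The space `V = F ⊗ Λ ⊗ ℂ[ℤα]`, realized as finitely supported functions from
the basis `{v_{S,T} ⊗ e^{pα}}` of `Λ ⊗ ℂ[ℤα]` to the Fock space `F`:
the index `((S,T), p)` records the basis vector `v_{S,T} ⊗ e^{pα}` and the value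
is the `F`-coordinate, so `Finsupp.single ((S,T), p) f` is `f ⊗ v_{S,T} ⊗ e^{pα}`. -/
abbrev VV : Type := ((Finset ℕ+ × Finset ℕ+) × ℤ) →₀ Fock

/-- `emb w p f` is the element `f ⊗ w ⊗ e^{pα}` of `V` for `w ∈ Λ`. -/
noncomputable def emb (w : Wedge) (p : ℤ) (f : Fock) : VV :=
  w.sum fun ST c => Finsupp.single (ST, p) (c • f)

/-- The operator `X(m)` of the representation `π` on `V`:
`X(m)(f ⊗ v_{S,T} ⊗ e^{pα}) = Σ_{l,k ≥ 0} (d^+_l c^+_k f) ⊗ A(m+l-k-p-1/2) v_{S,T} ⊗ e^{(p+1)α}`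
(only finitely many summands are nonzero on each vector). -/
noncomputable def Xop (m : ℤ) : VV → VV := fun u =>
  u.sum fun STp f =>
    ∑ᶠ lk : ℕ × ℕ,
      emb (Abasis ((m : ℚ) + lk.1 - lk.2 - STp.2 - 1/2) STp.1) (STp.2 + 1)
        (dOp true lk.1 (cOp true lk.2 f))

/-- The operator `Y(m)` of the representation `π` on `V`:
`Y(m)(f ⊗ v_{S,T} ⊗ e^{pα}) = Σ_{l,k ≥ 0} (d^-_l c^-_k f) ⊗ A*(m+l-k+p-1/2) v_{S,T} ⊗ e^{(p-1)α}`. -/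
noncomputable def Yop (m : ℤ) : VV → VV := fun u =>
  u.sum fun STp f =>
    ∑ᶠ lk : ℕ × ℕ,
      emb (AstarBasis ((m : ℚ) + lk.1 - lk.2 + STp.2 - 1/2) STp.1) (STp.2 - 1)
        (dOp false lk.1 (cOp false lk.2 f))

/-- The operator `H(m)` of the representation `π` on `V`: for `m ≠ 0` it acts as
`H(m)` on the Fock factor, and `H(0)` acts on `f ⊗ v ⊗ e^{pα}` by the scalar `2p`. -/
noncomputable def HVop (m : ℤ) : VV → VV := fun u =>
  u.sum fun STp f =>
    Finsupp.single STp (if m = 0 then ((2 : ℂ) * (STp.2 : ℂ)) • f else HF m f)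

/-- The weight of a monomial `x₁^{a₁} x₂^{a₂} ⋯`, namely `Σ n aₙ`. -/
def wtMon (μ : ℕ+ →₀ ℕ) : ℚ := μ.sum fun n a => (n : ℚ) * a

/-- The degree of the basis vector `v_{S,T}` of `Λ`: `Σ_{s∈S} s + Σ_{t∈T} t`. -/
def degWedge (ST : Finset ℕ+ × Finset ℕ+) : ℚ :=
  (∑ s ∈ ST.1, (s : ℚ)) + ∑ t ∈ ST.2, (t : ℚ)

/-- The degree operator `d` of the representation `π` on `V`:
`d (f ⊗ v_{S,T} ⊗ e^{pα}) = (-wt(f) - deg(v_{S,T}) - p²/2) ⬝ (f ⊗ v_{S,T} ⊗ e^{pα})`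
on monomials `f`. -/
noncomputable def dV : VV → VV := fun u =>
  u.sum fun STp f =>
    Finsupp.single STp
      (∑ μ ∈ f.support,
        monomial μ
          ((((-(wtMon μ) - degWedge STp.1 - (STp.2 : ℚ) ^ 2 / 2 : ℚ) : ℂ)) * coeff μ f))

/-- The vacuum space `Ω = Λ ⊗ ℂ[ℤα]`, with basis `{v_{S,T} ⊗ e^{pα}}`. -/
abbrev Vac : Type := ((Finset ℕ+ × Finset ℕ+) × ℤ) →₀ ℂ

/-- `embVac w p` is the element `w ⊗ e^{pα}` of `Ω` for `w ∈ Λ`. -/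
noncomputable def embVac (w : Wedge) (p : ℤ) : Vac :=
  w.sum fun ST c => Finsupp.single (ST, p) c

/-- The operator `Z⁺(m)` on `Ω`: `Z⁺(m)(v ⊗ e^{pα}) = A(m-p-1/2)v ⊗ e^{(p+1)α}`. -/
noncomputable def Zplus (m : ℤ) : Vac → Vac := fun u =>
  u.sum fun STp c => c • embVac (Abasis ((m : ℚ) - STp.2 - 1/2) STp.1) (STp.2 + 1)

/-- The operator `Z⁻(m)` on `Ω`: `Z⁻(m)(v ⊗ e^{pα}) = A*(m+p-1/2)v ⊗ e^{(p-1)α}`. -/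
noncomputable def Zminus (m : ℤ) : Vac → Vac := fun u =>
  u.sum fun STp c => c • embVac (AstarBasis ((m : ℚ) + STp.2 - 1/2) STp.1) (STp.2 - 1)

/-- Extension to `V = F ⊗ Λ ⊗ ℂ[ℤα]` of an operator `e` on the Fock factor,
i.e. `e ⊗ 1 ⊗ 1`. -/
noncomputable def extF (e : EndF) : VV → VV := fun u =>
  u.sum fun STp f => Finsupp.single STp (e f)

/-- The operator `Z⁺(m) = Σ_{a,b≥0} (d⁻_a ⊗ 1 ⊗ 1) ∘ X(m+a-b) ∘ (c⁻_b ⊗ 1 ⊗ 1)` on `V`,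
the coefficient of `z^{-m}` in `E⁻₊(z) X(z) E⁻₋(z)` (only finitely many summands act
nontrivially on each vector). -/
noncomputable def ZplusV (m : ℤ) : VV → VV := fun u =>
  ∑ᶠ ab : ℕ × ℕ,
    extF (dOp false ab.1) (Xop (m + (ab.1 : ℤ) - (ab.2 : ℤ)) (extF (cOp false ab.2) u))

/-- The operator `Z⁻(m) = Σ_{a,b≥0} (d⁺_a ⊗ 1 ⊗ 1) ∘ Y(m+a-b) ∘ (c⁺_b ⊗ 1 ⊗ 1)` on `V`,
the coefficient of `z^{-m}` in `E⁺₊(z) Y(z) E⁺₋(z)`. -/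
noncomputable def ZminusV (m : ℤ) : VV → VV := fun u =>
  ∑ᶠ ab : ℕ × ℕ,
    extF (dOp true ab.1) (Yop (m + (ab.1 : ℤ) - (ab.2 : ℤ)) (extF (cOp true ab.2) u))

/-- `Ncount j` is the number of quadruples `(a, S, T, p)` with `a : ℤ_{≥1} → ℤ_{≥0}`
finitely supported, `S, T` finite subsets of the positive integers and `p ∈ ℤ`,
satisfying `2 Σ_{n≥1} n a(n) + 2 (Σ_{s∈S} s + Σ_{t∈T} t) + p² = j`; this is the
dimension of the eigenspace of `d` with eigenvalue `-j/2` on `V`. -/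
noncomputable def Ncount (j : ℕ) : ℕ :=
  Nat.card {q : (ℕ+ →₀ ℕ) × Finset ℕ+ × Finset ℕ+ × ℤ //
    2 * (q.1.sum fun n a => (n : ℤ) * a) +
      2 * ((∑ s ∈ q.2.1, (s : ℤ)) + ∑ t ∈ q.2.2.1, (t : ℤ)) + q.2.2.2 ^ 2 = (j : ℤ)}


/-!
Write `γ_a` and `δ_j` for the coefficients of the exponents `cSeries true = -2 Σ ∂_a w^a` and
`dSeries false = Σ x_j z^j / (2j)`. The commutators `[γ_a, δ_j] = -[a = j] / j` are scalars, so
moving `δ_j` through `exp (cSeries true)` only shifts it by `-w^j / j`, i.e.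
`c_k δ_j = δ_j c_k - c_{k-j} / j`. Since the `δ_j` commute, the Euler operator gives
`l d_l = Σ_a a δ_a d_{l-a}`. Multiplying the identity by `l`, expanding `d_l` this way and
commuting `c_k` past each `δ_a`, strong induction on `l` leaves correction terms
`d_{l-a} c_{k-a} - d_{l-a-1} c_{k-a-1}` that telescope to `d_{l-1} c_{k-1}`.
-/

theorem map_pow_of_leibniz {R : Type*} [Ring R] (D : R →+ R)
    (hD : ∀ a b, D (a * b) = D a * b + a * D b) {g : R} (hg : Commute g (D g)) (m : ℕ) :
    D (g ^ m) = m • (D g * g ^ (m - 1)) := by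
  induction m with
  | zero => simpa using hD 1 1
  | succ m ih =>
    rw [pow_succ', hD, ih]
    rcases m with _ | m
    · simp
    · rw [mul_smul_comm, ← mul_assoc, hg.eq, mul_assoc, ← pow_succ', succ_nsmul' _ (m + 1)]
      simp

theorem Finset.sum_range_succ_inv_factorial_smul {K M : Type*} [Field K] [CharZero K]
    [AddCommGroup M] [Module K M] (f : ℕ → M) (N : ℕ) :
    ∑ m ∈ range (N + 1), (m.factorial : K)⁻¹ • (m • f (m - 1)) =
      ∑ m ∈ range N, (m.factorial : K)⁻¹ • f m := by
  rw [sum_range_succ']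
  refine (add_eq_left.mpr (by simp)).trans (sum_congr rfl fun m _ => ?_)
  rw [Nat.add_sub_cancel, ← Nat.cast_smul_eq_nsmul K, smul_smul, Nat.factorial_succ,
    Nat.cast_mul, mul_inv, mul_comm, ← mul_assoc,
    mul_inv_cancel₀ (Nat.cast_ne_zero.mpr m.succ_ne_zero), one_mul]

namespace PowerSeries

section Semiring

variable {A : Type*} [Semiring A]

theorem coeff_pow_eq_zero_of_lt {g : A⟦X⟧} (hg : constantCoeff g = 0) {n j : ℕ} (h : n < j) :
    coeff n (g ^ j) = 0 :=
  coeff_of_lt_order n ((Nat.cast_lt.mpr h).trans_le (le_order_pow_of_constantCoeff_eq_zero j hg))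

theorem commute_of_commute_coeff {f h : A⟦X⟧} (hfh : ∀ a b, Commute (coeff a f) (coeff b h)) :
    Commute f h := by
  refine ext fun n => ?_
  rw [coeff_mul, coeff_mul, ← Finset.Nat.sum_antidiagonal_swap]
  exact Finset.sum_congr rfl fun p _ => (hfh p.2 p.1).eq

/-- The Euler operator `X d/dX`; unlike `PowerSeries.derivative` it makes sense over a
noncommutative ring. -/
noncomputable def eulerOp : A⟦X⟧ →+ A⟦X⟧ where
  toFun f := mk fun n => n • coeff n f
  map_zero' := by ext; simp
  map_add' f h := by ext; simp

theorem coeff_eulerOp (f : A⟦X⟧) (n : ℕ) : coeff n (eulerOp f) = n • coeff n f :=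
  coeff_mk n fun n => n • coeff n f

theorem eulerOp_mul (f h : A⟦X⟧) : eulerOp (f * h) = eulerOp f * h + f * eulerOp h := by
  refine ext fun n => ?_
  simp only [map_add, coeff_eulerOp, coeff_mul, Finset.smul_sum, ← Finset.sum_add_distrib]
  refine Finset.sum_congr rfl fun p hp => ?_
  rw [← Finset.HasAntidiagonal.mem_antidiagonal.mp hp, add_smul, smul_mul_assoc, mul_smul_comm]

end Semiring

noncomputable def expSeries (g : PowerSeries EndF) : PowerSeries EndF := mk (expCoeff g)

theorem coeff_expSeries (g : PowerSeries EndF) (k : ℕ) : coeff k (expSeries g) = expCoeff g k :=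
  coeff_mk _ _

theorem expCoeff_eq_sum_range {g : PowerSeries EndF} (hg : constantCoeff g = 0) {k N : ℕ}
    (hN : k < N) :
    expCoeff g k = ∑ m ∈ Finset.range N, (m.factorial : ℂ)⁻¹ • coeff k (g ^ m) := by
  refine Finset.sum_subset (Finset.range_subset_range.mpr hN) fun m _ hm => ?_
  rw [coeff_pow_eq_zero_of_lt hg (by simpa using hm), smul_zero]

theorem coeff_mul_expSeries {g : PowerSeries EndF} (hg : constantCoeff g = 0)
    (t : PowerSeries EndF) {k N : ℕ} (hN : k < N) :
    coeff k (t * expSeries g) =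
      ∑ m ∈ Finset.range N, (m.factorial : ℂ)⁻¹ • coeff k (t * g ^ m) := by
  simp only [coeff_mul, Finset.smul_sum]
  rw [Finset.sum_comm]
  refine Finset.sum_congr rfl fun p hp => ?_
  rw [coeff_expSeries,
    expCoeff_eq_sum_range hg ((Finset.HasAntidiagonal.antidiagonal.snd_le hp).trans_lt hN),
    Finset.mul_sum]
  simp only [mul_smul_comm]

/-- `D (exp g) = D g * exp g` for a Leibniz map `D`, in the form that needs no continuity of `D`:
coefficientwise, on the truncated exponential. -/
theorem sum_inv_factorial_smul_coeff_map_pow (D : PowerSeries EndF →+ PowerSeries EndF)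
    (hD : ∀ a b, D (a * b) = D a * b + a * D b) {g : PowerSeries EndF}
    (hg : constantCoeff g = 0) (hcomm : Commute g (D g)) (k : ℕ) :
    ∑ m ∈ Finset.range (k + 2), (m.factorial : ℂ)⁻¹ • coeff k (D (g ^ m)) =
      coeff k (D g * expSeries g) := by
  simp only [map_pow_of_leibniz D hD hcomm, map_nsmul]
  rw [Finset.sum_range_succ_inv_factorial_smul (fun m => coeff k (D g * g ^ m)),
    coeff_mul_expSeries hg _ k.lt_succ_self]

theorem eulerOp_expSeries {g : PowerSeries EndF} (hg : constantCoeff g = 0)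
    (hcomm : Commute g (eulerOp g)) : eulerOp (expSeries g) = eulerOp g * expSeries g := by
  refine ext fun k => ?_
  rw [← sum_inv_factorial_smul_coeff_map_pow eulerOp eulerOp_mul hg hcomm, coeff_eulerOp,
    coeff_expSeries, expCoeff_eq_sum_range hg (by omega : k < k + 2), Finset.smul_sum]
  exact Finset.sum_congr rfl fun m _ => by rw [coeff_eulerOp, smul_comm]

theorem expSeries_mul_C {g : PowerSeries EndF} (hg : constantCoeff g = 0) {x : EndF}
    {s : PowerSeries EndF} (hs : g * C x = C x * g + s) (hcomm : Commute g s) :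
    expSeries g * C x = C x * expSeries g + s * expSeries g := by
  set D : PowerSeries EndF →+ PowerSeries EndF :=
    AddMonoidHom.mulRight (C x) - AddMonoidHom.mulLeft (C x) with hD
  have hDg : D g = s := by simp [hD, hs]
  have hleib (a b : PowerSeries EndF) : D (a * b) = D a * b + a * D b := by
    simp only [hD, AddMonoidHom.sub_apply, AddMonoidHom.coe_mulRight, AddMonoidHom.coe_mulLeft,
      sub_mul, mul_sub, mul_assoc]
    abel
  refine ext fun k => ?_
  rw [map_add, coeff_mul_C, coeff_C_mul, ← hDg,
    ← sum_inv_factorial_smul_coeff_map_pow D hleib hg (hDg ▸ hcomm), coeff_expSeries,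
    expCoeff_eq_sum_range hg (by omega : k < k + 2), Finset.sum_mul, Finset.mul_sum,
    ← sub_eq_iff_eq_add', ← Finset.sum_sub_distrib]
  simp only [hD, AddMonoidHom.sub_apply, AddMonoidHom.coe_mulRight, AddMonoidHom.coe_mulLeft,
    map_sub, coeff_mul_C, coeff_C_mul, smul_sub, smul_mul_assoc, mul_smul_comm]

end PowerSeries

open PowerSeries

theorem constantCoeff_dSeries (ε : Bool) : constantCoeff (dSeries ε) = 0 := by
  rw [← coeff_zero_eq_constantCoeff_apply, dSeries, coeff_mk, dif_neg (lt_irrefl 0)]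

theorem constantCoeff_cSeries (ε : Bool) : constantCoeff (cSeries ε) = 0 := by
  rw [← coeff_zero_eq_constantCoeff_apply, cSeries, coeff_mk, dif_neg (lt_irrefl 0)]

theorem coeff_dSeries (ε : Bool) (n : ℕ) :
    coeff n (dSeries ε) = if h : 0 < n then
      (sgn ε * (2 * n : ℂ)⁻¹) • LinearMap.mulLeft ℂ (X (n.toPNat h) : Fock) else 0 := by
  rw [dSeries, coeff_mk]
  split_ifs
  exacts [smul_smul _ _ _, rfl]

theorem coeff_cSeries (ε : Bool) (n : ℕ) :
    coeff n (cSeries ε) = if h : 0 < n then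
      (sgn ε * 2) • (pderiv (n.toPNat h)).toLinearMap else 0 := by
  rw [cSeries, coeff_mk]
  split_ifs
  exacts [smul_smul _ _ _, rfl]

theorem commute_coeff_dSeries (ε : Bool) (i j : ℕ) :
    Commute (coeff i (dSeries ε)) (coeff j (dSeries ε)) := by
  rw [coeff_dSeries, coeff_dSeries]
  split_ifs
  · exact (((Commute.all _ _).map (Algebra.lmul ℂ Fock)).smul_left _).smul_right _
  all_goals simp

theorem pderiv_mul_mulLeft_X (i j : ℕ+) :
    (pderiv i).toLinearMap * LinearMap.mulLeft ℂ (X j : Fock) =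
      LinearMap.mulLeft ℂ (X j : Fock) * (pderiv i).toLinearMap + if i = j then 1 else 0 := by
  refine LinearMap.ext fun f => ?_
  by_cases h : i = j
  · subst h
    simp [add_comm]
  · simp [pderiv_X_of_ne (Ne.symm h), h]

theorem coeff_cSeries_mul_coeff_dSeries (a j : ℕ) :
    coeff a (cSeries true) * coeff j (dSeries false) =
      coeff j (dSeries false) * coeff a (cSeries true) -
        if a = j then (j : ℂ)⁻¹ • 1 else 0 := by
  rw [coeff_cSeries, coeff_dSeries]
  rcases Nat.eq_zero_or_pos j with rfl | hj
  · simp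
  rcases Nat.eq_zero_or_pos a with rfl | ha
  · simp [hj.ne]
  rw [dif_pos ha, dif_pos hj, smul_mul_smul_comm, smul_mul_smul_comm, pderiv_mul_mulLeft_X,
    smul_add, mul_comm (sgn false * _), sub_eq_add_neg]
  congr 1
  by_cases h : a = j
  · subst h
    have hc : sgn true * 2 * (sgn false * (2 * (a : ℂ))⁻¹) = -(a : ℂ)⁻¹ := by
      have : (a : ℂ) ≠ 0 := Nat.cast_ne_zero.mpr ha.ne'
      rw [sgn, sgn, if_pos rfl, if_neg Bool.false_ne_true]
      field_simp
    rw [if_pos rfl, if_pos rfl, hc, neg_smul]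
  · have hne : a.toPNat ha ≠ j.toPNat hj := fun e => h (congr_arg PNat.val e)
    simp [h, hne]

theorem dOp_zero (ε : Bool) : dOp ε 0 = 1 := by
  simp [dOp, expCoeff]

theorem nsmul_dOp (ε : Bool) (l : ℕ) :
    l • dOp ε l =
      ∑ a ∈ Finset.range l, (a + 1) • (coeff (a + 1) (dSeries ε) * dOp ε (l - (a + 1))) := by
  have h := congr_arg (coeff l) (eulerOp_expSeries (constantCoeff_dSeries ε)
    (commute_of_commute_coeff fun a b => by
      rw [coeff_eulerOp]
      exact (commute_coeff_dSeries ε a b).smul_right _))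
  rw [coeff_eulerOp, PowerSeries.coeff_mul, Finset.Nat.sum_antidiagonal_eq_sum_range_succ_mk,
    Finset.sum_range_succ'] at h
  simpa [coeff_eulerOp, coeff_expSeries, dOp, mul_assoc] using h

theorem cOp_mul_coeff_dSeries (k j : ℕ) :
    cOp true k * coeff j (dSeries false) =
      coeff j (dSeries false) * cOp true k -
        if j ≤ k then (j : ℂ)⁻¹ • cOp true (k - j) else 0 := by
  have hs : cSeries true * C (coeff j (dSeries false)) =
      C (coeff j (dSeries false)) * cSeries true + (-(j : ℂ)⁻¹) • PowerSeries.X ^ j := by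
    refine ext fun n => ?_
    rw [map_add, PowerSeries.coeff_mul_C, PowerSeries.coeff_C_mul, PowerSeries.coeff_smul,
      PowerSeries.coeff_X_pow, coeff_cSeries_mul_coeff_dSeries]
    split_ifs with h
    · subst h
      simp [sub_eq_add_neg]
    · simp
  have h := congr_arg (coeff k)
    (expSeries_mul_C (constantCoeff_cSeries true) hs ((commute_X_pow _ j).smul_right _))
  rw [map_add, PowerSeries.coeff_mul_C, PowerSeries.coeff_C_mul, smul_mul_assoc,
    PowerSeries.coeff_smul, coeff_X_pow_mul'] at h
  simp only [coeff_expSeries] at h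
  unfold cOp
  rw [h, neg_smul, smul_ite, smul_zero, ← sub_eq_add_neg]

/-- `d_{l-a} c_{k-a}`, set to zero as soon as a subscript would be negative. -/
noncomputable def dcTerm (k l a : ℕ) : EndF :=
  if a ≤ k ∧ a ≤ l then dOp false (l - a) * cOp true (k - a) else 0

theorem dcTerm_eq_zero_of_lt {k l a : ℕ} (h : l < a) : dcTerm k l a = 0 :=
  if_neg fun h' => (h.trans_le h'.2).false

theorem dcTerm_sub_of_add_eq {k l a b : ℕ} (ha : a ≤ k) (hab : a + b = l) (i : ℕ) :
    dcTerm (k - a) b i = dcTerm k l (a + i) := by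
  unfold dcTerm
  split_ifs
  · rw [show b - i = l - (a + i) by omega, show k - a - i = k - (a + i) by omega]
  all_goals first | rfl | omega

theorem sum_range_nsmul_coeff_dSeries_mul_dcTerm (k l i : ℕ) :
    ∑ a ∈ Finset.range l, (a + 1) • (coeff (a + 1) (dSeries false) * dcTerm k (l - (a + 1)) i) =
      (l - i) • dcTerm k l i := by
  by_cases h : i ≤ k ∧ i ≤ l
  · obtain ⟨m, rfl⟩ : ∃ m, l = m + i := ⟨l - i, by omega⟩
    have htail (x : ℕ) (hx : x ∈ Finset.range i) : dcTerm k (m + i - (m + x + 1)) i = 0 :=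
      dcTerm_eq_zero_of_lt (by rw [Finset.mem_range] at hx; omega)
    rw [Finset.sum_range_add,
      Finset.sum_eq_zero (s := Finset.range i) fun x hx => by rw [htail x hx, mul_zero, smul_zero],
      add_zero,
      Nat.add_sub_cancel, dcTerm, if_pos h, Nat.add_sub_cancel, ← smul_mul_assoc, nsmul_dOp,
      Finset.sum_mul]
    refine Finset.sum_congr rfl fun a ha => ?_
    rw [Finset.mem_range] at ha
    rw [dcTerm, if_pos ⟨h.1, by omega⟩, show m + i - (a + 1) - i = m - (a + 1) by omega,
      smul_mul_assoc, mul_assoc]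
  · rw [dcTerm, if_neg h, smul_zero]
    refine Finset.sum_eq_zero fun a _ => ?_
    rw [dcTerm, if_neg (by omega), mul_zero, smul_zero]

theorem cOp_mul_dOp (k l : ℕ) : cOp true k * dOp false l = dcTerm k l 0 - dcTerm k l 1 := by
  induction l using Nat.strong_induction_on generalizing k with
  | _ l ih =>
  rcases Nat.eq_zero_or_pos l with rfl | hl
  · simp [dcTerm, dOp_zero]
  have hstep (a : ℕ) (ha : a < l) :
      cOp true k * ((a + 1) • (coeff (a + 1) (dSeries false) * dOp false (l - (a + 1)))) =
        (a + 1) • (coeff (a + 1) (dSeries false) *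
          (dcTerm k (l - (a + 1)) 0 - dcTerm k (l - (a + 1)) 1)) -
          (dcTerm k l (a + 1) - dcTerm k l (a + 1 + 1)) := by
    rw [mul_smul_comm, ← mul_assoc, cOp_mul_coeff_dSeries, sub_mul, mul_assoc, ih _ (by omega),
      smul_sub]
    congr 1
    split_ifs with hak
    · rw [smul_mul_assoc, ← Nat.cast_smul_eq_nsmul ℂ, smul_smul,
        mul_inv_cancel₀ (Nat.cast_ne_zero.mpr a.succ_ne_zero), one_smul, ih _ (by omega),
        dcTerm_sub_of_add_eq (l := l) hak (by omega), dcTerm_sub_of_add_eq (l := l) hak (by omega),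
        add_zero]
    · rw [zero_mul, smul_zero, dcTerm, dcTerm, if_neg (by omega), if_neg (by omega), sub_zero]
  refine smul_right_injective EndF (Nat.cast_ne_zero.mpr hl.ne' : (l : ℂ) ≠ 0) ?_
  simp only [Nat.cast_smul_eq_nsmul]
  obtain ⟨L, rfl⟩ : ∃ L, l = L + 1 := ⟨l - 1, by omega⟩
  calc (L + 1) • (cOp true k * dOp false (L + 1))
      = cOp true k * ((L + 1) • dOp false (L + 1)) := (mul_smul_comm _ _ _).symm
    _ = ∑ a ∈ Finset.range (L + 1), ((a + 1) • (coeff (a + 1) (dSeries false) *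
          (dcTerm k (L + 1 - (a + 1)) 0 - dcTerm k (L + 1 - (a + 1)) 1)) -
          (dcTerm k (L + 1) (a + 1) - dcTerm k (L + 1) (a + 1 + 1))) := by
      rw [nsmul_dOp, Finset.mul_sum]
      exact Finset.sum_congr rfl fun a ha => hstep a (Finset.mem_range.mp ha)
    _ = ((L + 1) • dcTerm k (L + 1) 0 - L • dcTerm k (L + 1) 1) - dcTerm k (L + 1) 1 := by
      rw [Finset.sum_sub_distrib, Finset.sum_range_sub' (fun a => dcTerm k (L + 1) (a + 1)),
        zero_add, dcTerm_eq_zero_of_lt (lt_add_one (L + 1)), sub_zero]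
      simp only [mul_sub, smul_sub, Finset.sum_sub_distrib,
        sum_range_nsmul_coeff_dSeries_mul_dcTerm, Nat.sub_zero, Nat.add_sub_cancel]
    _ = (L + 1) • (dcTerm k (L + 1) 0 - dcTerm k (L + 1) 1) := by
      rw [smul_sub, sub_sub, ← succ_nsmul]

theorem statement4 (k l : ℕ) :
    cOp true k * dOp false l =
      dOp false l * cOp true k -
        (if 1 ≤ k ∧ 1 ≤ l then dOp false (l - 1) * cOp true (k - 1) else 0) := by
  rw [cOp_mul_dOp, dcTerm, if_pos ⟨k.zero_le, l.zero_le⟩, Nat.sub_zero, Nat.sub_zero, dcTerm]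
end

section
/- For all m, n ∈ ℤ and every basis vector w = v_{S,T} ⊗ e^{pα} of Ω, all but finitely many terms of the sums Σ_{k≥0} Z⁻(m−k)Z⁻(n+k)w and Σ_{k≥0} Z⁻(n−k)Z⁻(m+k)w vanish, and the two sums are equal. (This is the componentwise form of the generalized commutator relation Z⁻(z)Z⁻(w)(1−w/z)^{−1} − Z⁻(w)Z⁻(z)(1−z/w)^{−1} = 0 of the Z-algebra representation π_Ω.) -/
open MvPolynomial

/-!
On `v_{S,T} ⊗ e^{pα}`, `Z⁻(a) Z⁻(b)` acts as `A*(a + p - 3/2) A*(b + p - 1/2)` followed by the shift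
to `e^{(p-2)α}`. In both sums `a + b = m + n` is fixed, so with `c = m + n + 2p - 3` every term is
`f j := A*(c - j + 1/2) A*(j + 1/2) v_{S,T} ⊗ e^{(p-2)α}` for some integer `j`, the first sum
running over `j ≥ n + p - 1` and the second over `j ≥ m + p - 1`. The operators `A*` anticommute,
so `f j + f (c - j) = 0`, and `f j = 0` as soon as `j > max S`. The two sums therefore differ by
the sum of `f` over an interval that `j ↦ c - j` maps onto itself, which vanishes.
-/

section Antisymmetric

variable {M : Type*} [AddCommGroup M] {f : ℤ → M} {N : ℤ}

lemma Set.finite_setOf_ne_zero_of_eventually_zero (hN : ∀ j, N ≤ j → f j = 0) (a : ℤ) :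
    {k : ℕ | f (a + k) ≠ 0}.Finite :=
  (Set.finite_Iio (N - a).toNat).subset fun k hk => by
    by_contra hlt
    exact hk (hN _ (by simp only [Set.mem_Iio, not_lt] at hlt; omega))

lemma finsum_nat_eq_sum_Ico_of_eventually_zero (hN : ∀ j, N ≤ j → f j = 0) {a : ℤ}
    (ha : a ≤ N) : ∑ᶠ k : ℕ, f (a + k) = ∑ j ∈ Finset.Ico a N, f j := by
  have hsupp : Function.support (fun k : ℕ => f (a + k)) ⊆ Finset.range (N - a).toNat := by
    intro k hk
    by_contra hlt
    simp only [Finset.coe_range, Set.mem_Iio, not_lt] at hlt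
    exact hk (hN _ (by omega))
  rw [finsum_eq_sum_of_support_subset _ hsupp]
  refine Finset.sum_nbij (fun k => a + k) (fun k hk => ?_) (fun k _ l _ h => ?_)
    (fun j hj => ⟨(j - a).toNat, ?_⟩) (fun _ _ => rfl)
  · simp only [Finset.mem_range, Finset.mem_Ico] at hk ⊢; omega
  · simpa using h
  · simp only [Finset.coe_Ico, Set.mem_Ico, Finset.coe_range, Set.mem_Iio] at hj ⊢; omega

variable [IsAddTorsionFree M] {c : ℤ}

lemma Finset.sum_Ico_eq_zero_of_antisymm (hf : ∀ j, f j + f (c - j) = 0) {a b : ℤ}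
    (hab : a + b = c + 1) : ∑ j ∈ Finset.Ico a b, f j = 0 := by
  refine Finset.sum_involution (fun j _ => c - j) (fun j _ => hf j) (fun j _ hj hfix => hj ?_)
    (fun j hj => ?_) (fun j _ => sub_sub_cancel c j)
  · have := hf j
    rwa [hfix, add_eq_zero_iff_eq_neg, self_eq_neg] at this
  · simp only [Finset.mem_Ico] at hj ⊢; omega

lemma finsum_nat_eq_of_antisymm (hf : ∀ j, f j + f (c - j) = 0) (hN : ∀ j, N ≤ j → f j = 0)
    {a b : ℤ} (hab : a + b = c + 1) : ∑ᶠ k : ℕ, f (a + k) = ∑ᶠ k : ℕ, f (b + k) := by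
  wlog hle : a ≤ b generalizing a b
  · exact (this (by omega) (by omega)).symm
  rw [finsum_nat_eq_sum_Ico_of_eventually_zero (N := max N b) (fun j hj => hN j (by omega))
      (by omega),
    finsum_nat_eq_sum_Ico_of_eventually_zero (N := max N b) (fun j hj => hN j (by omega))
      (by omega),
    ← Finset.Ico_union_Ico_eq_Ico hle (le_max_right N b),
    Finset.sum_union (Finset.Ico_disjoint_Ico_consecutive a b _),
    Finset.sum_Ico_eq_zero_of_antisymm hf hab, zero_add]

end Antisymmetric

lemma Rat.den_intCast_add_half (z : ℤ) : ((z : ℚ) + 1 / 2).den = 2 := by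
  rw [Rat.intCast_add_den]; norm_num

lemma Int.floor_intCast_add_half (z : ℤ) : ⌊(z : ℚ) + 1 / 2⌋ = z := by
  rw [add_comm, Int.floor_add_intCast]; norm_num

lemma PNat.card_filter_lt_lt (U : Finset ℕ+) (l : ℕ+) : (U.filter (· < l)).card < l := by
  have hsub : U.filter (· < l) ⊆ Finset.Ico 1 l := fun u hu => by
    simp only [Finset.mem_filter, Finset.mem_Ico] at hu ⊢
    exact ⟨one_le, hu.2⟩
  have := Finset.card_le_card hsub
  rw [PNat.card_Ico, PNat.one_coe] at this
  have := l.pos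
  omega

lemma neg_one_pow_of_add_one_eq {R : Type*} [Monoid R] [HasDistribNeg R] {a b : ℕ}
    (h : a + 1 = b) : (-1 : R) ^ b = -(-1) ^ a := by
  rw [← h, pow_succ, mul_neg_one]

section AstarBasis

variable {x : ℚ}

lemma AstarBasis_of_den_ne_two (h : x.den ≠ 2) : AstarBasis x = 0 := by
  ext1 ST; simp [AstarBasis, h]

lemma AstarBasis_of_floor_mem_Icc (h : ⌊x⌋ ∈ Set.Icc (-1) 0) : AstarBasis x = 0 := by
  ext1 ST
  simp only [Set.mem_Icc] at h
  unfold AstarBasis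
  dsimp only
  split_ifs <;> first | omega | rfl

lemma AstarBasis_of_floor_eq_pnat (hx : x.den = 2) {s : ℕ+} (hs : ⌊x⌋ = s) (S T : Finset ℕ+) :
    AstarBasis x (S, T) =
      if s ∈ S then ((s : ℂ) * (-1) ^ (S.filter (s < ·)).card) • Finsupp.single (S.erase s, T) 1
      else 0 := by
  have := s.pos
  unfold AstarBasis
  dsimp only
  rw [if_pos hx, dif_pos (by omega)]
  have hs' : (⟨⌊x⌋.toNat, by omega⟩ : ℕ+) = s := PNat.eq (by simp only [PNat.mk_coe]; omega)
  rw [hs', hs, Int.cast_natCast]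

lemma AstarBasis_of_floor_eq_neg_pnat (hx : x.den = 2) {k : ℕ+} (hk : ⌊x⌋ = -k - 1)
    (S T : Finset ℕ+) :
    AstarBasis x (S, T) =
      if k ∈ T then 0
      else (-((k : ℂ) + 1) * (-1) ^ (S.card + k - (T.filter (· < k)).card)) •
        Finsupp.single (S, insert k T) 1 := by
  have := k.pos
  unfold AstarBasis
  dsimp only
  rw [if_pos hx, dif_neg (by omega), dif_pos (by omega)]
  have hk' : (⟨(-⌊x⌋ - 1).toNat, by omega⟩ : ℕ+) = k :=
    PNat.eq (by simp only [PNat.mk_coe]; omega)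
  have hkn : (-⌊x⌋ - 1).toNat = k := by omega
  rw [hk', hkn, hk]
  push_cast; ring_nf

lemma AstarBasis_eq_zero_or (x : ℚ) :
    AstarBasis x = 0 ∨ x.den = 2 ∧ ((∃ s : ℕ+, ⌊x⌋ = s) ∨ ∃ k : ℕ+, ⌊x⌋ = -k - 1) := by
  by_cases hx : x.den = 2
  · by_cases hpos : 1 ≤ ⌊x⌋
    · exact Or.inr ⟨hx, Or.inl ⟨⟨⌊x⌋.toNat, by omega⟩, by simp only [PNat.mk_coe]; omega⟩⟩
    by_cases hneg : ⌊x⌋ ≤ -2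
    · exact Or.inr ⟨hx, Or.inr ⟨⟨(-⌊x⌋ - 1).toNat, by omega⟩, by simp only [PNat.mk_coe]; omega⟩⟩
    exact Or.inl (AstarBasis_of_floor_mem_Icc ⟨by omega, by omega⟩)
  · exact Or.inl (AstarBasis_of_den_ne_two hx)

end AstarBasis

lemma AstarOp_single (x : ℚ) (ST : Finset ℕ+ × Finset ℕ+) (c : ℂ) :
    AstarOp x (Finsupp.single ST c) = c • AstarBasis x ST := by
  simp [AstarOp]

lemma AstarOp_eq_linearCombination (x : ℚ) :
    AstarOp x = Finsupp.linearCombination ℂ (AstarBasis x) :=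
  LinearMap.ext fun w => by simp [AstarOp, Finsupp.linearCombination_apply]; rfl

lemma AstarOp_eq_zero {x : ℚ} (h : AstarBasis x = 0) : AstarOp x = 0 := by
  rw [AstarOp_eq_linearCombination, h, Finsupp.linearCombination_zero]

section Anticommutation

variable {x y : ℚ}

lemma AstarOp_AstarBasis_anticomm_of_pnat_pnat (hx : x.den = 2) (hy : y.den = 2)
    {s t : ℕ+} (hs : ⌊x⌋ = s) (ht : ⌊y⌋ = t) (ST : Finset ℕ+ × Finset ℕ+) :
    AstarOp x (AstarBasis y ST) + AstarOp y (AstarBasis x ST) = 0 := by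
  wlog hst : s ≤ t generalizing x y s t
  · rw [add_comm]; exact this hy hx ht hs (le_of_not_ge hst)
  obtain ⟨S, T⟩ := ST
  rw [AstarBasis_of_floor_eq_pnat hy ht, AstarBasis_of_floor_eq_pnat hx hs]
  rcases hst.eq_or_lt with rfl | hlt
  · split_ifs <;> simp only [map_smul, map_zero, AstarOp_single,
      AstarBasis_of_floor_eq_pnat hx hs, AstarBasis_of_floor_eq_pnat hy ht, Finset.notMem_erase,
      if_false, smul_zero, add_zero]
  have hne := hlt.ne
  by_cases htS : t ∈ S <;> by_cases hsS : s ∈ S <;>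
    simp only [map_smul, map_zero, AstarOp_single, AstarBasis_of_floor_eq_pnat hx hs,
      AstarBasis_of_floor_eq_pnat hy ht, Finset.mem_erase, ne_eq, one_smul, add_zero,
      hne, hne.symm, htS, hsS, not_false_eq_true, and_true, and_false, if_true, if_false, smul_zero]
  rw [smul_smul, smul_smul, Finset.erase_right_comm, ← add_smul]
  refine smul_eq_zero_of_left ?_ _
  have hts : (S.erase s).filter (t < ·) = S.filter (t < ·) := by
    rw [Finset.filter_erase, Finset.erase_eq_of_notMem (by simp [hlt.not_gt])]
  have hcard : ((S.erase t).filter (s < ·)).card + 1 = (S.filter (s < ·)).card := by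
    rw [Finset.filter_erase, Finset.card_erase_add_one (by simp [htS, hlt])]
  rw [hts, neg_one_pow_of_add_one_eq hcard]
  ring

lemma AstarOp_AstarBasis_anticomm_of_pnat_neg_pnat (hx : x.den = 2) (hy : y.den = 2)
    {s k : ℕ+} (hs : ⌊x⌋ = s) (hk : ⌊y⌋ = -k - 1) (ST : Finset ℕ+ × Finset ℕ+) :
    AstarOp x (AstarBasis y ST) + AstarOp y (AstarBasis x ST) = 0 := by
  obtain ⟨S, T⟩ := ST
  rw [AstarBasis_of_floor_eq_neg_pnat hy hk, AstarBasis_of_floor_eq_pnat hx hs]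
  by_cases hkT : k ∈ T <;> by_cases hsS : s ∈ S <;>
    simp only [map_smul, map_zero, AstarOp_single, AstarBasis_of_floor_eq_pnat hx hs,
      AstarBasis_of_floor_eq_neg_pnat hy hk, one_smul, add_zero,
      hkT, hsS, if_true, if_false, smul_zero]
  rw [smul_smul, smul_smul, ← add_smul]
  refine smul_eq_zero_of_left ?_ _
  have hcard : ((S.erase s).card + k - (T.filter (· < k)).card) + 1
      = S.card + k - (T.filter (· < k)).card := by
    have := PNat.card_filter_lt_lt T k
    have := Finset.card_erase_add_one hsS
    omega
  rw [neg_one_pow_of_add_one_eq hcard]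
  ring

lemma AstarOp_AstarBasis_anticomm_of_neg_pnat_neg_pnat (hx : x.den = 2) (hy : y.den = 2)
    {k l : ℕ+} (hk : ⌊x⌋ = -k - 1) (hl : ⌊y⌋ = -l - 1) (ST : Finset ℕ+ × Finset ℕ+) :
    AstarOp x (AstarBasis y ST) + AstarOp y (AstarBasis x ST) = 0 := by
  wlog hkl : k ≤ l generalizing x y k l
  · rw [add_comm]; exact this hy hx hl hk (le_of_not_ge hkl)
  obtain ⟨S, T⟩ := ST
  rw [AstarBasis_of_floor_eq_neg_pnat hy hl, AstarBasis_of_floor_eq_neg_pnat hx hk]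
  rcases hkl.eq_or_lt with rfl | hlt
  · split_ifs <;> simp only [map_smul, map_zero, AstarOp_single,
      AstarBasis_of_floor_eq_neg_pnat hx hk, AstarBasis_of_floor_eq_neg_pnat hy hl,
      Finset.mem_insert_self, if_true, smul_zero, add_zero]
  have hne := hlt.ne
  by_cases hlT : l ∈ T <;> by_cases hkT : k ∈ T <;>
    simp only [map_smul, map_zero, AstarOp_single, AstarBasis_of_floor_eq_neg_pnat hx hk,
      AstarBasis_of_floor_eq_neg_pnat hy hl, Finset.mem_insert, one_smul, add_zero,
      hne, hne.symm, hlT, hkT, or_true, or_false, if_true, if_false, smul_zero]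
  rw [smul_smul, smul_smul, Finset.insert_comm, ← add_smul]
  refine smul_eq_zero_of_left ?_ _
  have hlk : (insert l T).filter (· < k) = T.filter (· < k) := by
    rw [Finset.filter_insert, if_neg hlt.not_gt]
  have hcard_insert : ((insert k T).filter (· < l)).card = (T.filter (· < l)).card + 1 := by
    rw [Finset.filter_insert, if_pos hlt, Finset.card_insert_of_notMem (by simp [hkT])]
  have hcard : (S.card + l - ((insert k T).filter (· < l)).card) + 1
      = S.card + l - (T.filter (· < l)).card := by
    have := PNat.card_filter_lt_lt (insert k T) l
    omega
  rw [hlk, neg_one_pow_of_add_one_eq hcard]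
  ring

end Anticommutation

theorem AstarOp_AstarBasis_anticomm (x y : ℚ) (ST : Finset ℕ+ × Finset ℕ+) :
    AstarOp x (AstarBasis y ST) + AstarOp y (AstarBasis x ST) = 0 := by
  rcases AstarBasis_eq_zero_or x with hx0 | ⟨hx, ⟨s, hs⟩ | ⟨k, hk⟩⟩
  · simp [hx0, AstarOp_eq_zero hx0]
  all_goals rcases AstarBasis_eq_zero_or y with hy0 | ⟨hy, ⟨t, ht⟩ | ⟨l, hl⟩⟩
  all_goals try simp [hy0, AstarOp_eq_zero hy0]
  · exact AstarOp_AstarBasis_anticomm_of_pnat_pnat hx hy hs ht ST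
  · exact AstarOp_AstarBasis_anticomm_of_pnat_neg_pnat hx hy hs hl ST
  · rw [add_comm]; exact AstarOp_AstarBasis_anticomm_of_pnat_neg_pnat hy hx ht hk ST
  · exact AstarOp_AstarBasis_anticomm_of_neg_pnat_neg_pnat hx hy hk hl ST

lemma embVac_eq_lmapDomain (w : Wedge) (p : ℤ) :
    embVac w p = Finsupp.lmapDomain ℂ ℂ (·, p) w := rfl

lemma Zminus_eq_linearCombination (a : ℤ) :
    Zminus a = Finsupp.linearCombination ℂ
      (fun STp : (Finset ℕ+ × Finset ℕ+) × ℤ =>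
        embVac (AstarBasis ((a : ℚ) + STp.2 - 1 / 2) STp.1) (STp.2 - 1)) := by
  ext1 u; rw [Finsupp.linearCombination_apply]; rfl

lemma Zminus_embVac (a : ℤ) (w : Wedge) (q : ℤ) :
    Zminus a (embVac w q) = embVac (AstarOp ((a : ℚ) + q - 1 / 2) w) (q - 1) := by
  rw [Zminus_eq_linearCombination, embVac_eq_lmapDomain, Finsupp.lmapDomain_apply,
    Finsupp.linearCombination_mapDomain, AstarOp_eq_linearCombination, embVac_eq_lmapDomain,
    Finsupp.apply_linearCombination]
  rfl

lemma Zminus_single (a : ℤ) (ST : Finset ℕ+ × Finset ℕ+) (p : ℤ) :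
    Zminus a (Finsupp.single (ST, p) 1) =
      embVac (AstarBasis ((a : ℚ) + p - 1 / 2) ST) (p - 1) := by
  rw [Zminus_eq_linearCombination, Finsupp.linearCombination_single, one_smul]

noncomputable def doubleZminus (ST : Finset ℕ+ × Finset ℕ+) (p c j : ℤ) : Vac :=
  embVac (AstarOp (((c - j : ℤ) : ℚ) + 1 / 2) (AstarBasis ((j : ℚ) + 1 / 2) ST)) (p - 2)

lemma Zminus_Zminus_single (a b : ℤ) (ST : Finset ℕ+ × Finset ℕ+) (p : ℤ) :
    Zminus a (Zminus b (Finsupp.single (ST, p) 1)) =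
      doubleZminus ST p (a + b + 2 * p - 3) (b + p - 1) := by
  have hb : (b : ℚ) + p - 1 / 2 = ((b + p - 1 : ℤ) : ℚ) + 1 / 2 := by push_cast; ring
  have ha : (a : ℚ) + ((p - 1 : ℤ) : ℚ) - 1 / 2 =
      (((a + b + 2 * p - 3) - (b + p - 1) : ℤ) : ℚ) + 1 / 2 := by push_cast; ring
  rw [Zminus_single, Zminus_embVac, doubleZminus, hb, ha, show p - 1 - 1 = p - 2 by ring]

lemma doubleZminus_add_doubleZminus_sub (ST : Finset ℕ+ × Finset ℕ+) (p c j : ℤ) :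
    doubleZminus ST p c j + doubleZminus ST p c (c - j) = 0 := by
  rw [doubleZminus, doubleZminus, sub_sub_cancel, embVac_eq_lmapDomain, embVac_eq_lmapDomain,
    ← map_add, AstarOp_AstarBasis_anticomm, map_zero]

lemma exists_doubleZminus_eq_zero (S T : Finset ℕ+) (p c : ℤ) :
    ∃ N : ℤ, ∀ j, N ≤ j → doubleZminus (S, T) p c j = 0 := by
  refine ⟨((S.sup (fun s : ℕ+ => (s : ℕ)) : ℕ) : ℤ) + 1, fun j hj => ?_⟩
  have hsup : ∀ s ∈ S, (s : ℤ) < j := fun s hs => by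
    have := Finset.le_sup (f := fun s : ℕ+ => (s : ℕ)) hs
    omega
  obtain ⟨s, hs⟩ : ∃ s : ℕ+, j = s := ⟨⟨j.toNat, by omega⟩, by simp only [PNat.mk_coe]; omega⟩
  rw [doubleZminus, AstarBasis_of_floor_eq_pnat (Rat.den_intCast_add_half j)
    ((Int.floor_intCast_add_half j).trans hs), if_neg fun h => (hsup s h).ne hs.symm,
    map_zero, embVac_eq_lmapDomain, map_zero]

theorem statement14 (m n : ℤ) (S T : Finset ℕ+) (p : ℤ) (w : Vac)
    (hw : w = Finsupp.single ((S, T), p) 1) :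
    {k : ℕ | Zminus (m - k) (Zminus (n + k) w) ≠ 0}.Finite ∧
    {k : ℕ | Zminus (n - k) (Zminus (m + k) w) ≠ 0}.Finite ∧
    ∑ᶠ k : ℕ, Zminus (m - k) (Zminus (n + k) w) =
      ∑ᶠ k : ℕ, Zminus (n - k) (Zminus (m + k) w) := by
  subst hw
  obtain ⟨N, hN⟩ := exists_doubleZminus_eq_zero S T p (m + n + 2 * p - 3)
  have h₁ (k : ℕ) : Zminus (m - k) (Zminus (n + k) (Finsupp.single ((S, T), p) 1)) =
      doubleZminus (S, T) p (m + n + 2 * p - 3) (n + p - 1 + k) := by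
    rw [Zminus_Zminus_single]; congr 1 <;> ring
  have h₂ (k : ℕ) : Zminus (n - k) (Zminus (m + k) (Finsupp.single ((S, T), p) 1)) =
      doubleZminus (S, T) p (m + n + 2 * p - 3) (m + p - 1 + k) := by
    rw [Zminus_Zminus_single]; congr 1 <;> ring
  simp only [h₁, h₂]
  exact ⟨Set.finite_setOf_ne_zero_of_eventually_zero hN _,
    Set.finite_setOf_ne_zero_of_eventually_zero hN _,
    finsum_nat_eq_of_antisymm (doubleZminus_add_doubleZminus_sub _ _ _) hN (by ring)⟩
end
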